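/- Let m be the number of constraints, each constraint i having nominal coefficients ā_{ij}, right-hand side b_i, and its own deviation values d^k_{ij}. A vector x ∈ ℝ^n with x ≥ 0 is robust feasible (i.e., Σ_{j∈J} ā_{ij} x_j + DEV_i(x) ≤ b_i for all i = 1,…,m) if and only if Σ_{j∈J} ā_{ij} x_j − c*_i(x) ≤ b_i for all i = 1,…,m, where c*_i(x) is the minimum cost of a feasible integral flow of value n in the instance (G,c)^i_x. -/

import Mathlib

open Finset

/-- The band index set `K = {K⁻, …, -1, 0, 1, …, K⁺}`. -/
noncomputable def bands (Km Kp : ℤ) : Finset ℤ := Finset.Icc Km Kp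

/-- `Y_i`: the set of feasible 0-1 deviation assignments. -/
def memY (n : ℕ) (Km Kp : ℤ) (l u : ℤ → ℕ) (y : Fin n → ℤ → ℕ) : Prop :=
  (∀ j : Fin n, ∀ k ∈ bands Km Kp, y j k ≤ 1) ∧
  (∀ k ∈ bands Km Kp, l k ≤ ∑ j : Fin n, y j k ∧ ∑ j : Fin n, y j k ≤ u k) ∧
  (∀ j : Fin n, ∑ k ∈ bands Km Kp, y j k ≤ 1)

/-- `Ȳ_i`: feasible deviation assignments distributing all `n` coefficients among the bands. -/
def memYbar (n : ℕ) (Km Kp : ℤ) (l u : ℤ → ℕ) (y : Fin n → ℤ → ℕ) : Prop :=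
  memY n Km Kp l u y ∧ ∑ j : Fin n, ∑ k ∈ bands Km Kp, y j k = n

/-- A feasible integral flow of value `n` in the min-cost flow instance `(G,c)ⁱₓ`:
`fs j` is the flow on arc `(s, v_j)` (bounds `[0,1]`), `fm j k` is the flow on arc
`(v_j, w_k)` (bounds `[0,1]`), and `ft k` is the flow on arc `(w_k, t)` (bounds `[l_k, u_k]`);
flow conservation holds at every vertex `v_j` and `w_k`, and the flow value is `n`. -/
def IsFlow (n : ℕ) (Km Kp : ℤ) (l u : ℤ → ℕ)
    (fs : Fin n → ℕ) (fm : Fin n → ℤ → ℕ) (ft : ℤ → ℕ) : Prop :=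
  (∀ j : Fin n, fs j ≤ 1) ∧
  (∀ j : Fin n, ∀ k ∈ bands Km Kp, fm j k ≤ 1) ∧
  (∀ k ∈ bands Km Kp, l k ≤ ft k ∧ ft k ≤ u k) ∧
  (∀ j : Fin n, fs j = ∑ k ∈ bands Km Kp, fm j k) ∧
  (∀ k ∈ bands Km Kp, ∑ j : Fin n, fm j k = ft k) ∧
  (∑ j : Fin n, fs j = n)

/-- The cost `c(f) = ∑_j ∑_k (-d^k_{ij} x_j) f(v_j, w_k)` of a flow (only the middle arcs
have nonzero cost). -/
noncomputable def flowCost (n : ℕ) (Km Kp : ℤ) (d : Fin n → ℤ → ℝ) (x : Fin n → ℝ)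
    (fm : Fin n → ℤ → ℕ) : ℝ :=
  ∑ j : Fin n, ∑ k ∈ bands Km Kp, -(d j k * x j) * (fm j k : ℝ)


/-- Sends every coefficient assigned to no band to band `0`: for a row sum `≤ 1` the truncated
`1 - ∑` is exactly the missing unit. -/
noncomputable def fillBandZero {n : ℕ} (Km Kp : ℤ) (y : Fin n → ℤ → ℕ) : Fin n → ℤ → ℕ :=
  fun j k => y j k + if k = 0 then 1 - ∑ k' ∈ bands Km Kp, y j k' else 0

section FillBandZero

variable {n : ℕ} {Km Kp : ℤ} {y : Fin n → ℤ → ℕ}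

lemma fillBandZero_of_ne {k : ℤ} (hk : k ≠ 0) (j : Fin n) :
    fillBandZero Km Kp y j k = y j k := by
  simp [fillBandZero, hk]

lemma le_fillBandZero (j : Fin n) (k : ℤ) : y j k ≤ fillBandZero Km Kp y j k :=
  Nat.le_add_right _ _

lemma sum_fillBandZero (h0 : (0 : ℤ) ∈ bands Km Kp) {j : Fin n}
    (hrow : ∑ k ∈ bands Km Kp, y j k ≤ 1) :
    ∑ k ∈ bands Km Kp, fillBandZero Km Kp y j k = 1 := by
  simp only [fillBandZero, sum_add_distrib, sum_ite_eq', h0, if_true]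
  omega

lemma memY.isFlow_fillBandZero {l u : ℤ → ℕ} (hy : memY n Km Kp l u y)
    (h0 : (0 : ℤ) ∈ bands Km Kp) (hu0 : u 0 = n) :
    IsFlow n Km Kp l u (fun _ => 1) (fillBandZero Km Kp y)
      (fun k => ∑ j, fillBandZero Km Kp y j k) := by
  obtain ⟨-, hcol, hrow⟩ := hy
  have hrow' j := sum_fillBandZero h0 (hrow j)
  have hle_one j k (hk : k ∈ bands Km Kp) : fillBandZero Km Kp y j k ≤ 1 :=
    hrow' j ▸ single_le_sum (fun _ _ => Nat.zero_le _) hk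
  refine ⟨fun _ => le_rfl, hle_one, fun k hk => ⟨?_, ?_⟩, fun j => (hrow' j).symm,
    fun _ _ => rfl, by simp⟩
  · exact (hcol k hk).1.trans (sum_le_sum fun j _ => le_fillBandZero j k)
  · rcases eq_or_ne k 0 with rfl | hk0
    · calc ∑ j, fillBandZero Km Kp y j 0 ≤ ∑ _j : Fin n, 1 := sum_le_sum fun j _ => hle_one j 0 h0
        _ = u 0 := by simp [hu0]
    · simpa only [fillBandZero_of_ne hk0] using (hcol k hk).2

lemma flowCost_fillBandZero {d : Fin n → ℤ → ℝ} (hd0 : ∀ j, d j 0 = 0) (x : Fin n → ℝ) :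
    flowCost n Km Kp d x (fillBandZero Km Kp y) = flowCost n Km Kp d x y := by
  refine sum_congr rfl fun j _ => sum_congr rfl fun k _ => ?_
  rcases eq_or_ne k 0 with rfl | hk0
  · simp [hd0]
  · rw [fillBandZero_of_ne hk0]

end FillBandZero

lemma IsFlow.memY {n : ℕ} {Km Kp : ℤ} {l u : ℤ → ℕ} {fs : Fin n → ℕ} {fm : Fin n → ℤ → ℕ}
    {ft : ℤ → ℕ} (hf : IsFlow n Km Kp l u fs fm ft) : memY n Km Kp l u fm := by
  obtain ⟨hs, hm, ht, hv, hw, -⟩ := hf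
  exact ⟨hm, fun k hk => hw k hk ▸ ht k hk, fun j => hv j ▸ hs j⟩

lemma flowCost_eq_neg {n : ℕ} (Km Kp : ℤ) (d : Fin n → ℤ → ℝ) (x : Fin n → ℝ)
    (fm : Fin n → ℤ → ℕ) :
    flowCost n Km Kp d x fm = -∑ j, ∑ k ∈ bands Km Kp, d j k * x j * (fm j k : ℝ) := by
  simp only [flowCost, neg_mul, sum_neg_distrib]

/-- The flows of value `n` are, through their middle arcs, exactly the deviation assignments
in which every coefficient is assigned to some band; padding with band `0` makes every
assignment in `Y` of this form without changing its deviation. -/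
theorem isLeast_flowCost_of_isGreatest_deviation {n : ℕ} {Km Kp : ℤ}
    (h0 : (0 : ℤ) ∈ bands Km Kp) {d : Fin n → ℤ → ℝ} (hd0 : ∀ j, d j 0 = 0)
    {l u : ℤ → ℕ} (hu0 : u 0 = n) (x : Fin n → ℝ) {dev : ℝ}
    (hdev : IsGreatest {v : ℝ | ∃ y : Fin n → ℤ → ℕ, memY n Km Kp l u y ∧
      v = ∑ j, ∑ k ∈ bands Km Kp, d j k * x j * (y j k : ℝ)} dev) :
    IsLeast {c : ℝ | ∃ (fs : Fin n → ℕ) (fm : Fin n → ℤ → ℕ) (ft : ℤ → ℕ),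
      IsFlow n Km Kp l u fs fm ft ∧ c = flowCost n Km Kp d x fm} (-dev) := by
  obtain ⟨⟨y, hy, rfl⟩, hmax⟩ := hdev
  refine ⟨⟨_, _, _, hy.isFlow_fillBandZero h0 hu0, ?_⟩, ?_⟩
  · rw [flowCost_fillBandZero hd0, flowCost_eq_neg]
  · rintro c ⟨fs, fm, ft, hf, rfl⟩
    rw [flowCost_eq_neg, neg_le_neg_iff]
    exact hmax ⟨fm, hf.memY, rfl⟩

theorem stmt_13_general (n m : ℕ) (Km Kp : ℤ) (hKm : Km < 0) (hKp : 0 < Kp)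
    (a : Fin m → Fin n → ℝ) (b : Fin m → ℝ)
    (d : Fin m → Fin n → ℤ → ℝ) (hd0 : ∀ (i : Fin m) (j : Fin n), d i j 0 = 0)
    (l u : ℤ → ℕ)
    (hu0 : u 0 = n)
    (x : Fin n → ℝ)
    (DEV cstar : Fin m → ℝ)
    (hDEV : ∀ i : Fin m, IsGreatest {v : ℝ | ∃ y : Fin n → ℤ → ℕ, memY n Km Kp l u y ∧
      v = ∑ j : Fin n, ∑ k ∈ bands Km Kp, d i j k * x j * (y j k : ℝ)} (DEV i))
    (hcstar : ∀ i : Fin m, IsLeast {c : ℝ |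
      ∃ (fs : Fin n → ℕ) (fm : Fin n → ℤ → ℕ) (ft : ℤ → ℕ),
        IsFlow n Km Kp l u fs fm ft ∧ c = flowCost n Km Kp (d i) x fm} (cstar i)) :
    (∀ i : Fin m, ∑ j : Fin n, a i j * x j + DEV i ≤ b i) ↔
    (∀ i : Fin m, ∑ j : Fin n, a i j * x j - cstar i ≤ b i) := by
  have h0 : (0 : ℤ) ∈ bands Km Kp := mem_Icc.2 ⟨hKm.le, hKp.le⟩
  have hcstar_eq i : cstar i = -DEV i :=
    (hcstar i).unique (isLeast_flowCost_of_isGreatest_deviation h0 (hd0 i) hu0 x (hDEV i))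
  simp only [hcstar_eq, sub_neg_eq_add]

/-- with `m` constraints, `x ≥ 0` is robust feasible
(`∑_j ā_{ij} x_j + DEV_i(x) ≤ b_i` for all `i`, where `DEV i` is the attained maximum
deviation of constraint `i` over `Y_i`) iff `∑_j ā_{ij} x_j - c*_i(x) ≤ b_i` for all `i`,
where `cstar i` is the minimum cost of a feasible integral flow of value `n` in `(G,c)ⁱₓ`. -/
theorem stmt_13 (n m : ℕ) (hn : 0 < n) (Km Kp : ℤ) (hKm : Km < 0) (hKp : 0 < Kp)
    (a : Fin m → Fin n → ℝ) (b : Fin m → ℝ)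
    (d : Fin m → Fin n → ℤ → ℝ) (hd0 : ∀ (i : Fin m) (j : Fin n), d i j 0 = 0)
    (l u : ℤ → ℕ)
    (hlu : ∀ k ∈ bands Km Kp, l k ≤ u k)
    (hun : ∀ k ∈ bands Km Kp, u k ≤ n)
    (hu0 : u 0 = n)
    (hl : ∑ k ∈ bands Km Kp, l k ≤ n)
    (x : Fin n → ℝ) (hx : ∀ j, 0 ≤ x j)
    (DEV cstar : Fin m → ℝ)
    (hDEV : ∀ i : Fin m, IsGreatest {v : ℝ | ∃ y : Fin n → ℤ → ℕ, memY n Km Kp l u y ∧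
      v = ∑ j : Fin n, ∑ k ∈ bands Km Kp, d i j k * x j * (y j k : ℝ)} (DEV i))
    (hcstar : ∀ i : Fin m, IsLeast {c : ℝ |
      ∃ (fs : Fin n → ℕ) (fm : Fin n → ℤ → ℕ) (ft : ℤ → ℕ),
        IsFlow n Km Kp l u fs fm ft ∧ c = flowCost n Km Kp (d i) x fm} (cstar i)) :
    (∀ i : Fin m, ∑ j : Fin n, a i j * x j + DEV i ≤ b i) ↔
    (∀ i : Fin m, ∑ j : Fin n, a i j * x j - cstar i ≤ b i) :=
  stmt_13_general n m Km Kp hKm hKp a b d hd0 l u hu0 x DEV cstar hDEV hcstar
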